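/- Let n ≥ 0 and j, k ∈ ℕ, and let P : ℂ^{n+1} → ℂ be a smooth function that is harmonic for the Euclidean Laplacian on ℂ^{n+1} ≅ ℝ^{2n+2} and satisfies P(λ w) = λ^j λ̄^k P(w) for all λ ∈ ℂ and w ∈ ℂ^{n+1}. Then for every w ∈ ℂ^{n+1}: −(1−|w|²) Σ_{a,b=1}^{n+1} (δ_{ab} − w_a w̄_b) ∂_{w_a} ∂_{w̄_b} P (w) = j k (1−|w|²) P(w). -/

import Mathlib

noncomputable section

open Complex

/-- Directional (real) derivative of F : ℂ^m → ℂ along the constant vector v. -/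
def rd {m : ℕ} (v : Fin m → ℂ) (F : (Fin m → ℂ) → ℂ) : (Fin m → ℂ) → ℂ :=
  fun z => fderiv ℝ F z v

/-- The Wirtinger derivative ∂_{z_j} = (1/2)(∂_{u_j} − i ∂_{v_j}). -/
def wd {m : ℕ} (j : Fin m) (F : (Fin m → ℂ) → ℂ) : (Fin m → ℂ) → ℂ :=
  fun z => (1 / 2 : ℂ) * (rd (Pi.single j 1) F z - Complex.I * rd (Pi.single j Complex.I) F z)

/-- The Wirtinger derivative ∂_{z̄_j} = (1/2)(∂_{u_j} + i ∂_{v_j}). -/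
def wdbar {m : ℕ} (j : Fin m) (F : (Fin m → ℂ) → ℂ) : (Fin m → ℂ) → ℂ :=
  fun z => (1 / 2 : ℂ) * (rd (Pi.single j 1) F z + Complex.I * rd (Pi.single j Complex.I) F z)

/-- R = Σ_j z_j ∂_{z_j}. -/
def Rop {m : ℕ} (F : (Fin m → ℂ) → ℂ) : (Fin m → ℂ) → ℂ :=
  fun z => ∑ j, z j * wd j F z

/-- R̄ = Σ_j z̄_j ∂_{z̄_j}. -/
def Rbarop {m : ℕ} (F : (Fin m → ℂ) → ℂ) : (Fin m → ℂ) → ℂ :=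
  fun z => ∑ j, (starRingEnd ℂ) (z j) * wdbar j F z

/-- The second-order part Σ_{j,k} (δ_{jk} − z_j z̄_k) ∂_{z_j} ∂_{z̄_k}. -/
def secOrd {m : ℕ} (F : (Fin m → ℂ) → ℂ) : (Fin m → ℂ) → ℂ :=
  fun z => ∑ j, ∑ k,
    ((if j = k then 1 else 0) - z j * (starRingEnd ℂ) (z k)) * wd j (wdbar k F) z


/-- Second directional derivative along v. -/
def rd2 {m : ℕ} (v : Fin m → ℂ) (F : (Fin m → ℂ) → ℂ) : (Fin m → ℂ) → ℂ :=
  fun z => rd v (rd v F) z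

/-- The Euclidean Laplacian on ℂ^m ≅ ℝ^{2m}: Σ_a (∂²_{u_a} + ∂²_{v_a}). -/
def lapE {m : ℕ} (F : (Fin m → ℂ) → ℂ) : (Fin m → ℂ) → ℂ :=
  fun z => ∑ a, (rd2 (Pi.single a 1) F z + rd2 (Pi.single a Complex.I) F z)

section Aux

variable {m : ℕ} {F G : (Fin m → ℂ) → ℂ} {v u z : Fin m → ℂ} {b : Fin m}

lemma rd_contDiff (hF : ContDiff ℝ (⊤ : ℕ∞) F) : ContDiff ℝ (⊤ : ℕ∞) (rd v F) :=
  (hF.fderiv_right (by simp)).clm_apply contDiff_const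

lemma rd_diff (hF : ContDiff ℝ (⊤ : ℕ∞) F) : DifferentiableAt ℝ (rd v F) z :=
  ((rd_contDiff hF).differentiable (by simp)).differentiableAt

lemma wdbar_contDiff (hF : ContDiff ℝ (⊤ : ℕ∞) F) : ContDiff ℝ (⊤ : ℕ∞) (wdbar b F) := by
  unfold wdbar
  exact contDiff_const.mul ((rd_contDiff hF).add (contDiff_const.mul (rd_contDiff hF)))

lemma rd_add (hF : DifferentiableAt ℝ F z) (hG : DifferentiableAt ℝ G z) :
    rd v (fun y => F y + G y) z = rd v F z + rd v G z := by
  unfold rd; rw [fderiv_fun_add hF hG]; rfl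

lemma rd_const_mul (hF : DifferentiableAt ℝ F z) (c : ℂ) :
    rd v (fun y => c * F y) z = c * rd v F z := by
  unfold rd; rw [fderiv_const_mul hF c]; rfl

lemma rd_mul (hF : DifferentiableAt ℝ F z) (hG : DifferentiableAt ℝ G z) :
    rd v (fun y => F y * G y) z = rd v F z * G z + F z * rd v G z := by
  unfold rd; rw [fderiv_fun_mul hF hG]
  simp only [ContinuousLinearMap.add_apply, ContinuousLinearMap.smul_apply, smul_eq_mul]
  ring

lemma rd_sum {ι : Type*} {s : Finset ι} {f : ι → (Fin m → ℂ) → ℂ}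
    (h : ∀ i ∈ s, DifferentiableAt ℝ (f i) z) :
    rd v (fun y => ∑ i ∈ s, f i y) z = ∑ i ∈ s, rd v (f i) z := by
  unfold rd; rw [fderiv_fun_sum h]
  simp

lemma rd_swap (hF : ContDiff ℝ (⊤ : ℕ∞) F) : rd u (rd v F) z = rd v (rd u F) z := by
  have hd : DifferentiableAt ℝ (fderiv ℝ F) z :=
    ((hF.fderiv_right (m := (⊤ : ℕ∞)) (by simp)).differentiable (by simp)).differentiableAt
  have h1 : ∀ (a c : Fin m → ℂ), rd a (rd c F) z = fderiv ℝ (fderiv ℝ F) z a c := by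
    intro a c
    have h2 : rd a (rd c F) z = fderiv ℝ (fun y => fderiv ℝ F y c) z a := rfl
    rw [h2, fderiv_clm_apply hd (differentiableAt_const c)]
    simp
  rw [h1, h1]
  exact second_derivative_symmetric (f := F)
    (fun y => ((hF.differentiable (by simp)) y).hasFDerivAt) hd.hasFDerivAt u v

/-- derivative of `z ↦ conj (z b)`. -/
lemma rd_conj_proj : rd v (fun y : Fin m → ℂ => (starRingEnd ℂ) (y b)) z
    = (starRingEnd ℂ) (v b) := by
  have h : (fun y : Fin m → ℂ => (starRingEnd ℂ) (y b))
      = ⇑((Complex.conjCLE.toContinuousLinearMap).comp (ContinuousLinearMap.proj b)) := by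
    funext y; simp
  unfold rd
  rw [h, ContinuousLinearMap.fderiv]
  simp

lemma conj_proj_diff : DifferentiableAt ℝ (fun y : Fin m → ℂ => (starRingEnd ℂ) (y b)) z := by
  have h : (fun y : Fin m → ℂ => (starRingEnd ℂ) (y b))
      = ⇑((Complex.conjCLE.toContinuousLinearMap).comp (ContinuousLinearMap.proj b)) := by
    funext y; simp
  rw [h]
  exact (ContinuousLinearMap.differentiable _).differentiableAt

/-- decomposition of a complex coordinate vector into real directions. -/
lemma single_decomp (a : Fin m) (c : ℂ) :
    (Pi.single a c : Fin m → ℂ)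
      = c.re • (Pi.single a (1 : ℂ) : Fin m → ℂ) + c.im • (Pi.single a Complex.I : Fin m → ℂ) := by
  funext e
  by_cases h : e = a
  · subst h
    simp [Complex.real_smul]
  · simp [Pi.single_eq_of_ne h]

/-- Wirtinger splitting of a real directional derivative along `Pi.single a c`. -/
lemma coord_split (hF : DifferentiableAt ℝ F z) (a : Fin m) (c : ℂ) :
    c * wd a F z + (starRingEnd ℂ) c * wdbar a F z = fderiv ℝ F z (Pi.single a c) := by
  rw [single_decomp a c, map_add, map_smul, map_smul]
  have hre : (c.re • (fderiv ℝ F z) (Pi.single a (1:ℂ)) : ℂ)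
      = (c.re : ℂ) * rd (Pi.single a (1:ℂ)) F z := by
    rw [Complex.real_smul]; rfl
  have him : (c.im • (fderiv ℝ F z) (Pi.single a Complex.I) : ℂ)
      = (c.im : ℂ) * rd (Pi.single a Complex.I) F z := by
    rw [Complex.real_smul]; rfl
  rw [hre, him]
  unfold wd wdbar
  have hc : c = (c.re : ℂ) + (c.im : ℂ) * Complex.I := (Complex.re_add_im c).symm
  have hcc : (starRingEnd ℂ) c = (c.re : ℂ) - (c.im : ℂ) * Complex.I := by
    simp [Complex.ext_iff]
  set D1 := rd (Pi.single a (1:ℂ)) F z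
  set DI := rd (Pi.single a Complex.I) F z
  linear_combination (1/2 * (D1 - Complex.I * DI)) * hc + (1/2 * (D1 + Complex.I * DI)) * hcc
    - (c.im : ℂ) * DI * Complex.I_sq

end Aux

section Main

variable {m : ℕ} {P : (Fin m → ℂ) → ℂ} {j k : ℕ}

lemma keyA (hP : ContDiff ℝ (⊤ : ℕ∞) P)
    (hhom : ∀ (lam : ℂ) (w : Fin m → ℂ),
      P (fun a => lam * w a) = lam ^ j * (starRingEnd ℂ) lam ^ k * P w)
    (z : Fin m → ℂ) (μ : ℂ) :
    fderiv ℝ P z (fun a => μ * z a) = ((j : ℂ) * μ + (k : ℂ) * (starRingEnd ℂ) μ) * P z := by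
  set L : ℂ →L[ℝ] (Fin m → ℂ) :=
    (((ContinuousLinearMap.id ℂ ℂ).smulRight z).restrictScalars ℝ) with hLdef
  have hL : ∀ lam : ℂ, L lam = fun a => lam * z a := by
    intro lam; funext a; simp [hLdef]
  have hL1 : L 1 = z := by rw [hL]; funext a; simp
  have hg : HasFDerivAt (fun lam : ℂ => P (fun a => lam * z a))
      ((fderiv ℝ P z).comp L) 1 := by
    have h1 : HasFDerivAt P (fderiv ℝ P z) (L 1) := by
      rw [hL1]; exact ((hP.differentiable (by simp)) z).hasFDerivAt
    have h0 := h1.comp (1 : ℂ) (L.hasFDerivAt)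
    rw [show (fun lam : ℂ => P (fun a => lam * z a)) = P ∘ L from
      funext fun lam => by rw [Function.comp_apply, hL], hL1] at *
    exact h0
  have hj : HasFDerivAt (fun lam : ℂ => lam ^ j)
      ((ContinuousLinearMap.smulRight (1 : ℂ →L[ℂ] ℂ) ((j : ℂ))).restrictScalars ℝ) 1 := by
    have := (hasDerivAt_pow j (1 : ℂ))
    simp only [one_pow, mul_one] at this
    exact this.hasFDerivAt.restrictScalars ℝ
  have hk1 : HasFDerivAt (fun lam : ℂ => (starRingEnd ℂ) lam ^ k)
      ((Complex.conjCLE : ℂ →L[ℝ] ℂ).comp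
        ((ContinuousLinearMap.smulRight (1 : ℂ →L[ℂ] ℂ) ((k : ℂ))).restrictScalars ℝ)) 1 := by
    have hpow : HasFDerivAt (fun lam : ℂ => lam ^ k)
        ((ContinuousLinearMap.smulRight (1 : ℂ →L[ℂ] ℂ) ((k : ℂ))).restrictScalars ℝ) 1 := by
      have := (hasDerivAt_pow k (1 : ℂ))
      simp only [one_pow, mul_one] at this
      exact this.hasFDerivAt.restrictScalars ℝ
    have := (Complex.conjCLE.toContinuousLinearMap.hasFDerivAt (x := (1:ℂ)^k)).comp (1:ℂ) hpow
    have hfun : (fun lam : ℂ => (starRingEnd ℂ) lam ^ k)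
        = (⇑Complex.conjCLE.toContinuousLinearMap ∘ fun lam : ℂ => lam ^ k) := by
      funext lam; simp [map_pow]
    rw [hfun]; exact this
  have hr : HasFDerivAt (fun lam : ℂ => lam ^ j * (starRingEnd ℂ) lam ^ k * P z) _ 1 :=
    (hj.mul hk1).mul_const (P z)
  have heq : (fun lam : ℂ => P (fun a => lam * z a))
      = fun lam : ℂ => lam ^ j * (starRingEnd ℂ) lam ^ k * P z := funext fun lam => hhom lam z
  have hfin := (heq ▸ hg).unique hr
  have := congrArg (fun (T : ℂ →L[ℝ] ℂ) => T μ) hfin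
  simp only [ContinuousLinearMap.comp_apply, ContinuousLinearMap.coe_restrictScalars',
    ContinuousLinearMap.smulRight_apply, ContinuousLinearMap.one_apply,
    ContinuousLinearMap.add_apply, ContinuousLinearMap.smul_apply] at this
  rw [hL] at this
  simp only [ContinuousLinearEquiv.coe_coe, Complex.conjCLE_apply, smul_eq_mul, one_pow,
    map_one, map_mul, Complex.conj_natCast] at this
  rw [this]; ring

lemma euler (hP : ContDiff ℝ (⊤ : ℕ∞) P)
    (hhom : ∀ (lam : ℂ) (w : Fin m → ℂ),
      P (fun a => lam * w a) = lam ^ j * (starRingEnd ℂ) lam ^ k * P w)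
    (z : Fin m → ℂ) :
    (∑ a, z a * wd a P z = (j : ℂ) * P z) ∧
      (∑ a, (starRingEnd ℂ) (z a) * wdbar a P z = (k : ℂ) * P z) := by
  have hPd : DifferentiableAt ℝ P z := (hP.differentiable (by simp)) z
  set A := ∑ a, z a * wd a P z with hA
  set B := ∑ a, (starRingEnd ℂ) (z a) * wdbar a P z with hB
  have h1 : A + B = ((j : ℂ) + (k : ℂ)) * P z := by
    have hkey := keyA hP hhom z 1
    simp only [one_mul, map_one, mul_one] at hkey
    calc A + B = ∑ a, (z a * wd a P z + (starRingEnd ℂ) (z a) * wdbar a P z) := by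
          rw [hA, hB, Finset.sum_add_distrib]
      _ = ∑ a, fderiv ℝ P z (Pi.single a (z a)) :=
          Finset.sum_congr rfl fun a _ => coord_split hPd a (z a)
      _ = fderiv ℝ P z (∑ a, Pi.single a (z a)) := (map_sum _ _ _).symm
      _ = fderiv ℝ P z z := by rw [Finset.univ_sum_single]
      _ = ((j : ℂ) + (k : ℂ)) * P z := hkey
  have h2 : A - B = ((j : ℂ) - (k : ℂ)) * P z := by
    have hkey := keyA hP hhom z Complex.I
    have hIs : ∑ a, (Complex.I * z a * wd a P z
        + (starRingEnd ℂ) (Complex.I * z a) * wdbar a P z)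
        = fderiv ℝ P z (fun a => Complex.I * z a) := by
      calc ∑ a, (Complex.I * z a * wd a P z
            + (starRingEnd ℂ) (Complex.I * z a) * wdbar a P z)
          = ∑ a, fderiv ℝ P z (Pi.single a (Complex.I * z a)) :=
            Finset.sum_congr rfl fun a _ => coord_split hPd a (Complex.I * z a)
        _ = fderiv ℝ P z (∑ a, Pi.single a (Complex.I * z a)) := (map_sum _ _ _).symm
        _ = fderiv ℝ P z (fun a => Complex.I * z a) := by
            rw [Finset.univ_sum_single (fun a => Complex.I * z a)]
    rw [hkey] at hIs
    have hLHS : ∑ a, (Complex.I * z a * wd a P z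
        + (starRingEnd ℂ) (Complex.I * z a) * wdbar a P z)
        = Complex.I * A - Complex.I * B := by
      rw [hA, hB, Finset.mul_sum, Finset.mul_sum, ← Finset.sum_sub_distrib]
      refine Finset.sum_congr rfl fun a _ => ?_
      simp only [map_mul, Complex.conj_I]
      ring
    rw [hLHS] at hIs
    apply mul_left_cancel₀ Complex.I_ne_zero
    rw [mul_sub, hIs, Complex.conj_I]
    ring
  constructor
  · linear_combination (1/2 : ℂ) * h1 + (1/2 : ℂ) * h2
  · linear_combination (1/2 : ℂ) * h1 - (1/2 : ℂ) * h2

/-- mixed Euler identity for the conjugate-differentiated function. -/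
lemma mixedEuler (hP : ContDiff ℝ (⊤ : ℕ∞) P)
    (hhom : ∀ (lam : ℂ) (w : Fin m → ℂ),
      P (fun a => lam * w a) = lam ^ j * (starRingEnd ℂ) lam ^ k * P w)
    (z : Fin m → ℂ) (a : Fin m) :
    ∑ b, (starRingEnd ℂ) (z b) * wd a (wdbar b P) z = (k : ℂ) * wd a P z := by
  have hwdbar : ∀ b : Fin m, ContDiff ℝ (⊤ : ℕ∞) (wdbar b P) := fun b => wdbar_contDiff hP
  -- differentiate the anti-Euler identity in direction v
  have hstep : ∀ v : Fin m → ℂ,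
      ∑ b, ((starRingEnd ℂ) (v b) * wdbar b P z
        + (starRingEnd ℂ) (z b) * rd v (wdbar b P) z) = (k : ℂ) * rd v P z := by
    intro v
    have hfun : (fun y : Fin m → ℂ => ∑ b, (starRingEnd ℂ) (y b) * wdbar b P y)
        = fun y => (k : ℂ) * P y := funext fun y => (euler hP hhom y).2
    have hrd := congrArg (fun (F : (Fin m → ℂ) → ℂ) => rd v F z) hfun
    have hsum : rd v (fun y : Fin m → ℂ => ∑ b, (starRingEnd ℂ) (y b) * wdbar b P y) z
        = ∑ b, ((starRingEnd ℂ) (v b) * wdbar b P z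
          + (starRingEnd ℂ) (z b) * rd v (wdbar b P) z) := by
      rw [rd_sum (f := fun b y => (starRingEnd ℂ) (y b) * wdbar b P y) fun b _ => (conj_proj_diff).mul
        (((hwdbar b).differentiable (by simp)).differentiableAt)]
      refine Finset.sum_congr rfl fun b _ => ?_
      rw [rd_mul conj_proj_diff (((hwdbar b).differentiable (by simp)).differentiableAt),
        rd_conj_proj]
    rw [hsum] at hrd
    rw [hrd, rd_const_mul ((hP.differentiable (by simp)) z)]
  have E1 := hstep (Pi.single a 1)
  have EI := hstep (Pi.single a Complex.I)
  have hs1 : ∑ b, ((starRingEnd ℂ) ((Pi.single a (1:ℂ) : Fin m → ℂ) b) * wdbar b P z)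
      = wdbar a P z := by
    rw [Finset.sum_eq_single a]
    · simp
    · intro b _ hb; simp [Pi.single_eq_of_ne hb]
    · simp
  have hsI : ∑ b, ((starRingEnd ℂ) ((Pi.single a Complex.I : Fin m → ℂ) b) * wdbar b P z)
      = -Complex.I * wdbar a P z := by
    rw [Finset.sum_eq_single a]
    · simp [Complex.conj_I]
    · intro b _ hb; simp [Pi.single_eq_of_ne hb]
    · simp
  rw [Finset.sum_add_distrib, hs1] at E1
  rw [Finset.sum_add_distrib, hsI] at EI
  have hgoal : ∑ b, (starRingEnd ℂ) (z b) * wd a (wdbar b P) z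
      = (1/2 : ℂ) * (∑ b, (starRingEnd ℂ) (z b) * rd (Pi.single a 1) (wdbar b P) z)
        - (Complex.I/2) * (∑ b, (starRingEnd ℂ) (z b)
            * rd (Pi.single a Complex.I) (wdbar b P) z) := by
    rw [Finset.mul_sum, Finset.mul_sum, ← Finset.sum_sub_distrib]
    refine Finset.sum_congr rfl fun b _ => ?_
    unfold wd
    ring
  rw [hgoal]
  unfold wd
  linear_combination (1/2 : ℂ) * E1 - (Complex.I/2) * EI
    - (wdbar a P z / 2) * Complex.I_sq

end Main

theorem stmt9 (n : ℕ) (j k : ℕ) (P : (Fin (n + 1) → ℂ) → ℂ)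
    (hP : ContDiff ℝ (⊤ : ℕ∞) P)
    (hharm : ∀ z, lapE P z = 0)
    (hhom : ∀ (lam : ℂ) (w : Fin (n + 1) → ℂ),
      P (fun a => lam * w a) = lam ^ j * (starRingEnd ℂ) lam ^ k * P w) :
    ∀ w : Fin (n + 1) → ℂ,
      -(((1 - ∑ a, ‖w a‖ ^ 2 : ℝ)) : ℂ) * secOrd P w
        = (j : ℂ) * (k : ℂ) * ((1 - ∑ a, ‖w a‖ ^ 2 : ℝ) : ℂ) * P w := by
  intro w
  -- Step 1: the double sum with coefficients z_a z̄_b equals j k P.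
  have hdouble : ∑ a, ∑ b, w a * (starRingEnd ℂ) (w b) * wd a (wdbar b P) w
      = (j : ℂ) * (k : ℂ) * P w := by
    have h1 : ∀ a : Fin (n+1), ∑ b, w a * (starRingEnd ℂ) (w b) * wd a (wdbar b P) w
        = w a * ((k : ℂ) * wd a P w) := by
      intro a
      rw [← mixedEuler hP hhom w a, Finset.mul_sum]
      exact Finset.sum_congr rfl fun b _ => by ring
    calc ∑ a, ∑ b, w a * (starRingEnd ℂ) (w b) * wd a (wdbar b P) w
        = ∑ a, w a * ((k : ℂ) * wd a P w) := Finset.sum_congr rfl fun a _ => h1 a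
      _ = (k : ℂ) * ∑ a, w a * wd a P w := by rw [Finset.mul_sum]; exact Finset.sum_congr rfl fun a _ => by ring
      _ = (j : ℂ) * (k : ℂ) * P w := by rw [(euler hP hhom w).1]; ring
  -- Step 2: the diagonal (trace) part vanishes by harmonicity.
  have htrace : ∑ a, wd a (wdbar a P) w = 0 := by
    have hq : ∀ a : Fin (n+1), wd a (wdbar a P) w
        = (1/4 : ℂ) * (rd2 (Pi.single a 1) P w + rd2 (Pi.single a Complex.I) P w) := by
      intro a
      have hd1 : DifferentiableAt ℝ (rd (Pi.single a (1:ℂ)) P) w := rd_diff hP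
      have hdI : DifferentiableAt ℝ (rd (Pi.single a Complex.I) P) w := rd_diff hP
      have hdI' : DifferentiableAt ℝ (fun y => Complex.I * rd (Pi.single a Complex.I) P y) w :=
        (differentiableAt_const _).mul hdI
      have hrdwdbar : ∀ v : Fin (n+1) → ℂ, rd v (wdbar a P) w
          = (1/2 : ℂ) * (rd v (rd (Pi.single a 1) P) w
            + Complex.I * rd v (rd (Pi.single a Complex.I) P) w) := by
        intro v
        have : wdbar a P = fun y => (1/2 : ℂ) * (rd (Pi.single a 1) P y
            + Complex.I * rd (Pi.single a Complex.I) P y) := rfl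
        rw [this, rd_const_mul (F := fun y => rd (Pi.single a 1) P y
            + Complex.I * rd (Pi.single a Complex.I) P y) (hd1.add hdI'), rd_add hd1 hdI',
          rd_const_mul hdI]
      have hswap := rd_swap (u := Pi.single a (1:ℂ)) (v := Pi.single a Complex.I)
        (z := w) hP
      show (1/2 : ℂ) * (rd (Pi.single a 1) (wdbar a P) w
          - Complex.I * rd (Pi.single a Complex.I) (wdbar a P) w) = _
      rw [hrdwdbar (Pi.single a 1), hrdwdbar (Pi.single a Complex.I)]
      show _ = (1/4 : ℂ) * (rd (Pi.single a 1) (rd (Pi.single a 1) P) w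
        + rd (Pi.single a Complex.I) (rd (Pi.single a Complex.I) P) w)
      linear_combination (Complex.I / 4) * hswap
        + (-(rd (Pi.single a Complex.I) (rd (Pi.single a Complex.I) P) w) / 4) * Complex.I_sq
    have hlap := hharm w
    unfold lapE at hlap
    calc ∑ a, wd a (wdbar a P) w
        = ∑ a, (1/4 : ℂ) * (rd2 (Pi.single a 1) P w + rd2 (Pi.single a Complex.I) P w) :=
          Finset.sum_congr rfl fun a _ => hq a
      _ = (1/4 : ℂ) * ∑ a, (rd2 (Pi.single a 1) P w + rd2 (Pi.single a Complex.I) P w) :=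
          (Finset.mul_sum _ _ _).symm
      _ = 0 := by rw [hlap, mul_zero]
  -- Put it together.
  have hsec : secOrd P w = -((j : ℂ) * (k : ℂ)) * P w := by
    unfold secOrd
    have hsplit : ∀ a b : Fin (n+1),
        ((if a = b then (1:ℂ) else 0) - w a * (starRingEnd ℂ) (w b)) * wd a (wdbar b P) w
        = (if a = b then (1:ℂ) else 0) * wd a (wdbar b P) w
          - w a * (starRingEnd ℂ) (w b) * wd a (wdbar b P) w := fun a b => by ring
    simp only [hsplit, Finset.sum_sub_distrib]
    rw [hdouble]
    have hdiag : ∑ a : Fin (n+1), ∑ b : Fin (n+1),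
        (if a = b then (1:ℂ) else 0) * wd a (wdbar b P) w = ∑ a, wd a (wdbar a P) w := by
      refine Finset.sum_congr rfl fun a _ => ?_
      rw [Finset.sum_eq_single a]
      · simp
      · intro b _ hb; simp [Ne.symm hb]
      · simp
    rw [hdiag, htrace]
    ring
  rw [hsec]
  ring

end
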